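/- arXiv:0904.4310 — 9 statements merged into one kernel-verified Lean document; each statement's English description precedes it below -/
import Mathlib

section
/- Let M be a free R-module of rank 3. There is an R-module isomorphism ⋀³(⋀² M) ≅ (⋀³ M)⊗² sending (e₁∧e₂) ∧ (e₂∧e₃) ∧ (e₃∧e₁) to (e₁∧e₂∧e₃) ⊗ (e₁∧e₂∧e₃) for a basis e₁, e₂, e₃ of M. -/
/-!
Both sides are free of rank one. For a basis `b` of a module of rank `n`, every alternating
`n`-form is `b.det` times its value on `b`, so `⋀ⁿ` is free on the wedge of `b`; hence
`(⋀³M)⊗²` is free on `(e₀∧e₁∧e₂)⊗(e₀∧e₁∧e₂)`. The wedges `eᵢ∧eᵢ₊₁` (indices mod 3) form a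
basis of `⋀²M`: the forms `x∧y ↦ det(eₖ₊₂, x, y)` are dual to them, so they define a surjection
`⋀²M → R³`, which is injective because `⋀²M ≅ R³` and commutative rings have the Orzech
property. Thus `⋀³(⋀²M)` is free on the given element, and the isomorphism matches generators.
-/

open ExteriorAlgebra TensorProduct

/-- The wedge `v 0 ∧ ⋯ ∧ v (n-1)` as an element of the `n`-th exterior power `⋀[R]^n M`. -/
noncomputable def wedge {R M : Type*} [CommRing R] [AddCommGroup M] [Module R M]
    (n : ℕ) (v : Fin n → M) : ⋀[R]^n M :=
  ⟨ExteriorAlgebra.ιMulti R n v, ExteriorAlgebra.ιMulti_range R n (Set.mem_range_self v)⟩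

open Module

section

variable {R M N : Type*} [CommRing R] [AddCommGroup M] [Module R M] [AddCommGroup N] [Module R N]

theorem wedge_eq_ιMulti (n : ℕ) (v : Fin n → M) : wedge n v = exteriorPower.ιMulti R n v :=
  rfl

theorem AlternatingMap.apply_eq_basis_det_smul {ι : Type*} [Fintype ι] [DecidableEq ι]
    (b : Basis ι R M) (f : M [⋀^ι]→ₗ[R] N) (v : ι → M) : f v = b.det v • f b := by
  suffices f = (LinearMap.toSpanSingleton R N (f b)).compAlternatingMap b.det from
    congr($this v)
  refine b.ext_alternating fun i hi => ?_
  let σ : Equiv.Perm ι := Equiv.ofBijective i (Finite.injective_iff_bijective.1 hi)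
  change f (b ∘ σ) = b.det (b ∘ σ) • f b
  simp [AlternatingMap.map_perm, Basis.det_self]

namespace Module.Basis

section TopExteriorPower

variable {n : ℕ} (b : Basis (Fin n) R M)

theorem exteriorPower_ιMulti_eq_det_smul (v : Fin n → M) :
    exteriorPower.ιMulti R n v = b.det v • exteriorPower.ιMulti R n b :=
  (exteriorPower.ιMulti R n).apply_eq_basis_det_smul b v

noncomputable def topExteriorPowerEquiv : ⋀[R]^n M ≃ₗ[R] R :=
  .ofLinearMap (exteriorPower.alternatingMapLinearEquiv b.det)
    (LinearMap.toSpanSingleton R _ (exteriorPower.ιMulti R n b))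
    (by ext; simp [b.det_self])
    (by ext v; simp [← b.exteriorPower_ιMulti_eq_det_smul])

@[simp]
theorem topExteriorPowerEquiv_ιMulti (v : Fin n → M) :
    b.topExteriorPowerEquiv (exteriorPower.ιMulti R n v) = b.det v :=
  exteriorPower.alternatingMapLinearEquiv_apply_ιMulti _ _

@[simp]
theorem topExteriorPowerEquiv_symm_apply (r : R) :
    b.topExteriorPowerEquiv.symm r = r • exteriorPower.ιMulti R n b :=
  rfl

end TopExteriorPower

section OfApplyEqSingle

variable {ι : Type*} [Fintype ι] [DecidableEq ι]

theorem bijective_of_apply_eq_single (b : Basis ι R N) (c : N →ₗ[R] ι → R) {v : ι → N}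
    (hv : ∀ i, c (v i) = Pi.single i 1) : Function.Bijective c := by
  refine OrzechProperty.bijective_of_surjective_of_injective b.equivFun.toLinearMap c
    b.equivFun.injective ?_
  rw [← LinearMap.range_eq_top, eq_top_iff, ← (Pi.basisFun R ι).span_eq, Submodule.span_le]
  rintro _ ⟨i, rfl⟩
  exact ⟨v i, by simp [hv]⟩

noncomputable def ofApplyEqSingle (b : Basis ι R N) (c : N →ₗ[R] ι → R) {v : ι → N}
    (hv : ∀ i, c (v i) = Pi.single i 1) : Basis ι R N :=
  (Pi.basisFun R ι).map (LinearEquiv.ofBijective c (b.bijective_of_apply_eq_single c hv)).symm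

@[simp]
theorem coe_ofApplyEqSingle (b : Basis ι R N) (c : N →ₗ[R] ι → R) {v : ι → N}
    (hv : ∀ i, c (v i) = Pi.single i 1) : ⇑(b.ofApplyEqSingle c hv) = v := by
  funext i
  simp [ofApplyEqSingle, LinearEquiv.symm_apply_eq, hv]

end OfApplyEqSingle

section WedgeTwo

variable (e : Basis (Fin 3) R M)

noncomputable def wedgeTwoCoords : ⋀[R]^2 M →ₗ[R] Fin 3 → R :=
  LinearMap.pi fun k => exteriorPower.alternatingMapLinearEquiv (e.det.curryLeft (e (k + 2)))

theorem wedgeTwoCoords_ιMulti_succ (i : Fin 3) :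
    e.wedgeTwoCoords (exteriorPower.ιMulti R 2 ![e i, e (i + 1)]) = Pi.single i 1 := by
  funext k
  simp only [wedgeTwoCoords, LinearMap.pi_apply,
    exteriorPower.alternatingMapLinearEquiv_apply_ιMulti, AlternatingMap.curryLeft_apply_apply]
  fin_cases k <;> fin_cases i <;> simp [Basis.det_apply, Matrix.det_fin_three, Basis.toMatrix_apply]

noncomputable def wedgeTwoBasis : Basis (Fin 3) R (⋀[R]^2 M) :=
  have card_eq : Fintype.card (Set.powersetCard (Fin 3) 2) = 3 := by
    rw [← Nat.card_eq_fintype_card, Set.powersetCard.card, Nat.card_fin]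
    rfl
  ((e.exteriorPower 2).reindex (Fintype.equivFinOfCardEq card_eq)).ofApplyEqSingle
    e.wedgeTwoCoords e.wedgeTwoCoords_ιMulti_succ

theorem coe_wedgeTwoBasis :
    ⇑e.wedgeTwoBasis = fun i => exteriorPower.ιMulti R 2 ![e i, e (i + 1)] := by
  rw [wedgeTwoBasis, coe_ofApplyEqSingle]

end WedgeTwo

end Module.Basis

end

/-- For `M` free of rank `3` there is an isomorphism `⋀³(⋀²M) ≅ (⋀³M)⊗²` sending
`(e₁∧e₂)∧(e₂∧e₃)∧(e₃∧e₁)` to `(e₁∧e₂∧e₃)⊗(e₁∧e₂∧e₃)`. -/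
theorem stmt_6 {R M : Type*} [CommRing R] [AddCommGroup M] [Module R M]
    (e : Module.Basis (Fin 3) R M) :
    ∃ f : (⋀[R]^3 (⋀[R]^2 M)) ≃ₗ[R] ((⋀[R]^3 M) ⊗[R] (⋀[R]^3 M)),
      f (wedge 3 ![wedge 2 ![e 0, e 1], wedge 2 ![e 1, e 2], wedge 2 ![e 2, e 0]])
        = (wedge 3 ![e 0, e 1, e 2]) ⊗ₜ[R] (wedge 3 ![e 0, e 1, e 2]) := by
  let B := e.wedgeTwoBasis
  have hB : ![wedge 2 ![e 0, e 1], wedge 2 ![e 1, e 2], wedge 2 ![e 2, e 0]] = ⇑B := by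
    rw [e.coe_wedgeTwoBasis]
    funext i
    fin_cases i <;> rfl
  have he : ![e 0, e 1, e 2] = ⇑e := by
    funext i
    fin_cases i <;> rfl
  refine ⟨B.topExteriorPowerEquiv ≪≫ₗ (TensorProduct.lid R R).symm ≪≫ₗ
    TensorProduct.congr e.topExteriorPowerEquiv.symm e.topExteriorPowerEquiv.symm, ?_⟩
  rw [hB, he]
  simp [wedge_eq_ιMulti, Basis.det_self]
end

section
/- The map s : M⊗⁶ → (⋀³M)⊗² given by x⊗x'⊗y⊗y'⊗z⊗z' ↦ (x∧x'∧y')⊗(y∧z∧z') − (x∧x'∧y)⊗(y'∧z∧z') satisfies s((x∧x')⊗(y∧y')⊗(z∧z')) = −s((y∧y')⊗(x∧x')⊗(z∧z')) for all x,x',y,y',z,z' ∈ M, where M is a free R-module of rank 3. -/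
open ExteriorAlgebra TensorProduct

theorem AlternatingMap.map_eq_basis_det_smul {R M N ι : Type*} [CommRing R] [AddCommGroup M]
    [Module R M] [AddCommGroup N] [Module R N] [Fintype ι] [DecidableEq ι]
    (e : Module.Basis ι R M) (f : M [⋀^ι]→ₗ[R] N) (v : ι → M) :
    f v = e.det v • f e := by
  suffices f = (LinearMap.toSpanSingleton R N (f e)).compAlternatingMap e.det from
    congr($this v)
  refine e.ext_alternating fun i hi => ?_
  let σ : Equiv.Perm ι := Equiv.ofBijective i (Finite.injective_iff_bijective.1 hi)
  change f (e ∘ σ) = e.det (e ∘ σ) • f e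
  simp [AlternatingMap.map_perm, e.det_self]

theorem wedge_eq_basis_det_smul {R M : Type*} [CommRing R] [AddCommGroup M] [Module R M]
    {n : ℕ} (e : Module.Basis (Fin n) R M) (v : Fin n → M) :
    wedge (R := R) n v = e.det v • wedge (R := R) n e :=
  (exteriorPower.ιMulti R n).map_eq_basis_det_smul e v

theorem Module.Basis.det_fin_three_plucker {R M : Type*} [CommRing R] [AddCommGroup M]
    [Module R M] (e : Module.Basis (Fin 3) R M) (x x' y y' z z' : M) :
    e.det ![x, x', y'] * e.det ![y, z, z'] - e.det ![x, x', y] * e.det ![y', z, z']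
      = -(e.det ![y, y', x'] * e.det ![x, z, z']
          - e.det ![y, y', x] * e.det ![x', z, z']) := by
  simp only [Module.Basis.det_apply, Matrix.det_fin_three, Module.Basis.toMatrix_apply,
    Matrix.cons_val_zero, Matrix.cons_val_one, Matrix.head_cons, Matrix.cons_val_two,
    Matrix.tail_cons]
  ring

/-- The map `s : M⊗⁶ → (⋀³M)⊗²`,
`x⊗x'⊗y⊗y'⊗z⊗z' ↦ (x∧x'∧y')⊗(y∧z∧z') − (x∧x'∧y)⊗(y'∧z∧z')`, is alternating in the sense
that `s((x∧x')⊗(y∧y')⊗(z∧z')) = −s((y∧y')⊗(x∧x')⊗(z∧z'))` for `M` free of rank 3. -/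
theorem stmt_8 {R M : Type*} [CommRing R] [AddCommGroup M] [Module R M]
    (e : Module.Basis (Fin 3) R M) (x x' y y' z z' : M) :
    (wedge (R := R) 3 ![x, x', y']) ⊗ₜ[R] (wedge (R := R) 3 ![y, z, z'])
        - (wedge (R := R) 3 ![x, x', y]) ⊗ₜ[R] (wedge (R := R) 3 ![y', z, z'])
      = -((wedge (R := R) 3 ![y, y', x']) ⊗ₜ[R] (wedge (R := R) 3 ![x, z, z'])
          - (wedge (R := R) 3 ![y, y', x]) ⊗ₜ[R] (wedge (R := R) 3 ![x', z, z'])) := by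
  simp only [wedge_eq_basis_det_smul e ![_, _, _], tmul_smul, ← smul_tmul', smul_smul]
  match_scalars
  linear_combination e.det_fin_three_plucker x x' y y' z z'
end

section
/- Let B be the free R-algebra with basis 1, i, j, k and multiplication i² = ui − bc, j² = vj − ac, k² = wk − ab, jk = a(u−i), ki = b(v−j), ij = c(w−k), kj = −vw + ai + wj + vk, ik = −uw + wi + bj + uk, ji = −uv + vi + uj + ck, for a,b,c,u,v,w ∈ R. Then B is an associative R-algebra. -/
/-- Multiplication on the free module `R⁴` with basis `1, i, j, k` given by the table
`i² = ui − bc`, `j² = vj − ac`, `k² = wk − ab`, `jk = a(u−i)`, `ki = b(v−j)`, `ij = c(w−k)`,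
`kj = −vw + ai + wj + vk`, `ik = −uw + wi + bj + uk`, `ji = −uv + vi + uj + ck`. -/
def qMul {R : Type*} [CommRing R] (a b c u v w : R) (x y : Fin 4 → R) : Fin 4 → R :=
  ![x 0 * y 0 - b * c * (x 1 * y 1) + c * w * (x 1 * y 2) - u * w * (x 1 * y 3)
      - u * v * (x 2 * y 1) - a * c * (x 2 * y 2) + a * u * (x 2 * y 3)
      + b * v * (x 3 * y 1) - v * w * (x 3 * y 2) - a * b * (x 3 * y 3),
    x 0 * y 1 + x 1 * y 0 + u * (x 1 * y 1) + w * (x 1 * y 3) + v * (x 2 * y 1)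
      - a * (x 2 * y 3) + a * (x 3 * y 2),
    x 0 * y 2 + x 2 * y 0 + b * (x 1 * y 3) + u * (x 2 * y 1) + v * (x 2 * y 2)
      - b * (x 3 * y 1) + w * (x 3 * y 2),
    x 0 * y 3 + x 3 * y 0 - c * (x 1 * y 2) + u * (x 1 * y 3) + c * (x 2 * y 1)
      + v * (x 3 * y 2) + w * (x 3 * y 3)]

/-! Each axiom is, coordinate by coordinate, a polynomial identity in the entries of the vectors
and in `a, b, c, u, v, w`, so ring normalization decides it. For associativity this is the point:
the table comes from an even Clifford algebra, so no relation among the parameters is needed. -/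

section QMul

variable {R : Type*} [CommRing R] (a b c u v w : R)

theorem qMul_assoc (x y z : Fin 4 → R) :
    qMul a b c u v w (qMul a b c u v w x y) z = qMul a b c u v w x (qMul a b c u v w y z) := by
  ext m
  fin_cases m <;>
    simp only [qMul, Fin.isValue, Fin.zero_eta, Fin.mk_one, Fin.reduceFinMk, Matrix.cons_val,
      Matrix.cons_val_zero, Matrix.cons_val_one] <;> ring

theorem one_qMul (x : Fin 4 → R) : qMul a b c u v w ![1, 0, 0, 0] x = x := by
  ext m
  fin_cases m <;>
    simp only [qMul, Fin.isValue, Fin.zero_eta, Fin.mk_one, Fin.reduceFinMk, Matrix.cons_val,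
      Matrix.cons_val_zero, Matrix.cons_val_one] <;> ring

theorem qMul_one (x : Fin 4 → R) : qMul a b c u v w x ![1, 0, 0, 0] = x := by
  ext m
  fin_cases m <;>
    simp only [qMul, Fin.isValue, Fin.zero_eta, Fin.mk_one, Fin.reduceFinMk, Matrix.cons_val,
      Matrix.cons_val_zero, Matrix.cons_val_one] <;> ring

theorem add_qMul (x y z : Fin 4 → R) :
    qMul a b c u v w (x + y) z = qMul a b c u v w x z + qMul a b c u v w y z := by
  ext m
  fin_cases m <;>
    simp only [qMul, Fin.isValue, Fin.zero_eta, Fin.mk_one, Fin.reduceFinMk, Matrix.cons_val,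
      Matrix.cons_val_zero, Matrix.cons_val_one, Pi.add_apply] <;> ring

theorem qMul_add (x y z : Fin 4 → R) :
    qMul a b c u v w x (y + z) = qMul a b c u v w x y + qMul a b c u v w x z := by
  ext m
  fin_cases m <;>
    simp only [qMul, Fin.isValue, Fin.zero_eta, Fin.mk_one, Fin.reduceFinMk, Matrix.cons_val,
      Matrix.cons_val_zero, Matrix.cons_val_one, Pi.add_apply] <;> ring

theorem smul_qMul (r : R) (x y : Fin 4 → R) :
    qMul a b c u v w (r • x) y = r • qMul a b c u v w x y := by
  ext m
  fin_cases m <;>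
    simp only [qMul, Fin.isValue, Fin.zero_eta, Fin.mk_one, Fin.reduceFinMk, Matrix.cons_val,
      Matrix.cons_val_zero, Matrix.cons_val_one, Pi.smul_apply, smul_eq_mul] <;> ring

theorem qMul_smul (r : R) (x y : Fin 4 → R) :
    qMul a b c u v w x (r • y) = r • qMul a b c u v w x y := by
  ext m
  fin_cases m <;>
    simp only [qMul, Fin.isValue, Fin.zero_eta, Fin.mk_one, Fin.reduceFinMk, Matrix.cons_val,
      Matrix.cons_val_zero, Matrix.cons_val_one, Pi.smul_apply, smul_eq_mul] <;> ring

end QMul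

/-- The free module `R⁴` with the multiplication table of the even Clifford algebra of the
ternary form `ax² + by² + cz² + uyz + vxz + wxy` is an associative unital `R`-algebra. -/
theorem stmt_9 {R : Type*} [CommRing R] (a b c u v w : R) :
    (∀ x y z : Fin 4 → R, qMul a b c u v w (qMul a b c u v w x y) z
        = qMul a b c u v w x (qMul a b c u v w y z)) ∧
    (∀ x : Fin 4 → R, qMul a b c u v w ![1, 0, 0, 0] x = x) ∧
    (∀ x : Fin 4 → R, qMul a b c u v w x ![1, 0, 0, 0] = x) ∧
    (∀ x y z : Fin 4 → R, qMul a b c u v w (x + y) z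
        = qMul a b c u v w x z + qMul a b c u v w y z) ∧
    (∀ x y z : Fin 4 → R, qMul a b c u v w x (y + z)
        = qMul a b c u v w x y + qMul a b c u v w x z) ∧
    (∀ (r : R) (x y : Fin 4 → R), qMul a b c u v w (r • x) y = r • qMul a b c u v w x y) ∧
    (∀ (r : R) (x y : Fin 4 → R), qMul a b c u v w x (r • y) = r • qMul a b c u v w x y) :=
  ⟨qMul_assoc a b c u v w, one_qMul a b c u v w, qMul_one a b c u v w, add_qMul a b c u v w,
    qMul_add a b c u v w, smul_qMul a b c u v w, qMul_smul a b c u v w⟩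
end

section
/- Let B be the free quaternion ring over R with basis 1, i, j, k associated to the ternary quadratic form q(x,y,z) = ax² + by² + cz² + uyz + vxz + wxy (multiplication rules i² = ui − bc, jk = a(u−i), etc.). Then the map fixing R and sending i ↦ u − i, j ↦ v − j, k ↦ w − k extends R-linearly to a standard involution on B. -/
/-!
The involution `σ` is defined on the basis, so each of its properties reduces to finitely many
basis checks. Anti-multiplicativity is bilinear in the two factors and involutivity is linear,
so both are checked on basis elements against the multiplication table. The norm `x * σ x` is
quadratic in `x`, but it polarizes: the cross term `x * σ y + y * σ x = z + σ z` with
`z = x * σ y` is a trace, hence a scalar, so it too suffices to check `x * σ x ∈ R` on the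
basis.
-/

open Module

section AntiInvolution

variable {R B ι : Type*} [CommRing R] [Ring B] [Algebra R B]

theorem LinearMap.map_algebraMap_of_map_one (σ : B →ₗ[R] B) (h1 : σ 1 = 1) (r : R) :
    σ (algebraMap R B r) = algebraMap R B r := by
  rw [Algebra.algebraMap_eq_smul_one, map_smul, h1]

theorem Module.Basis.mem_of_forall_mem (bB : Basis ι R B) {p : Submodule R B}
    (h : ∀ m, bB m ∈ p) (x : B) : x ∈ p :=
  Submodule.span_le.mpr (Set.range_subset_iff.mpr h) (bB.mem_span x)

theorem Module.Basis.map_mul_rev_of_mul_basis (bB : Basis ι R B) (σ : B →ₗ[R] B)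
    (h : ∀ m n, σ (bB m * bB n) = σ (bB n) * σ (bB m)) (x y : B) :
    σ (x * y) = σ y * σ x := by
  have key : (LinearMap.mul R B).compr₂ σ = (LinearMap.mul R B).flip.compl₁₂ σ σ :=
    bB.ext fun m => bB.ext fun n => by simpa using h m n
  simpa using LinearMap.congr_fun₂ key x y

theorem Module.Basis.mul_map_mem_bot_of_mul_basis (bB : Basis ι R B) (σ : B →ₗ[R] B)
    (hmul : ∀ x y, σ (x * y) = σ y * σ x) (hinv : ∀ x, σ (σ x) = x)
    (htr : ∀ x, x + σ x ∈ (⊥ : Subalgebra R B))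
    (hb : ∀ m, bB m * σ (bB m) ∈ (⊥ : Subalgebra R B)) (x : B) :
    x * σ x ∈ (⊥ : Subalgebra R B) := by
  induction bB.mem_span x using Submodule.span_induction with
  | mem _ hx => obtain ⟨m, rfl⟩ := hx; exact hb m
  | zero => simp
  | add x y _ _ hx hy =>
    have polar : (x + y) * σ (x + y) = x * σ x + y * σ y + (x * σ y + σ (x * σ y)) := by
      rw [hmul, hinv, map_add]; noncomm_ring
    rw [polar]
    exact add_mem (add_mem hx hy) (htr _)
  | smul r x _ hx =>
    rw [map_smul, smul_mul_smul_comm]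
    exact Subalgebra.smul_mem _ hx _

end AntiInvolution

section QuaternionTable

variable {R B : Type*} [CommRing R] [Ring B] [Algebra R B]

structure IsQuaternionTable (a b c u v w : R) (i j k : B) : Prop where
  ii : i * i = u • i - algebraMap R B (b * c)
  jj : j * j = v • j - algebraMap R B (a * c)
  kk : k * k = w • k - algebraMap R B (a * b)
  jk : j * k = a • (algebraMap R B u - i)
  ki : k * i = b • (algebraMap R B v - j)
  ij : i * j = c • (algebraMap R B w - k)
  kj : k * j = algebraMap R B (-(v * w)) + a • i + w • j + v • k
  ik : i * k = algebraMap R B (-(u * w)) + w • i + b • j + u • k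
  ji : j * i = algebraMap R B (-(u * v)) + v • i + u • j + c • k

structure IsQuaternionConj (σ : B →ₗ[R] B) (u v w : R) (i j k : B) : Prop where
  map_one : σ 1 = 1
  map_i : σ i = algebraMap R B u - i
  map_j : σ j = algebraMap R B v - j
  map_k : σ k = algebraMap R B w - k

variable {a b c u v w : R} {i j k : B} {σ : B →ₗ[R] B}

theorem exists_isQuaternionConj (bB : Basis (Fin 4) R B) (hb : ⇑bB = ![1, i, j, k]) :
    ∃ σ : B →ₗ[R] B, IsQuaternionConj σ u v w i j k := by
  have hσ := bB.constr_basis R ![1, algebraMap R B u - i, algebraMap R B v - j,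
    algebraMap R B w - k]
  simp only [hb] at hσ
  exact ⟨_, hσ 0, hσ 1, hσ 2, hσ 3⟩

namespace IsQuaternionConj

theorem involutive (hσ : IsQuaternionConj σ u v w i j k) (bB : Basis (Fin 4) R B)
    (hb : ⇑bB = ![1, i, j, k]) (x : B) : σ (σ x) = x := by
  have h : σ ∘ₗ σ = LinearMap.id := bB.ext fun m => by
    fin_cases m <;>
      simp [hb, hσ.map_one, hσ.map_i, hσ.map_j, hσ.map_k,
        σ.map_algebraMap_of_map_one hσ.map_one]
  exact LinearMap.congr_fun h x

theorem add_map_mem_bot (hσ : IsQuaternionConj σ u v w i j k) (bB : Basis (Fin 4) R B)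
    (hb : ⇑bB = ![1, i, j, k]) (x : B) : x + σ x ∈ (⊥ : Subalgebra R B) := by
  refine Submodule.mem_comap.mp <| bB.mem_of_forall_mem
    (p := (Subalgebra.toSubmodule ⊥).comap (LinearMap.id + σ)) (fun m => ?_) x
  fin_cases m <;>
    simp only [hb, Fin.reduceFinMk, Matrix.cons_val, Submodule.mem_comap, LinearMap.add_apply,
      LinearMap.id_apply, hσ.map_one, hσ.map_i, hσ.map_j, hσ.map_k, add_sub_cancel,
      Subalgebra.mem_toSubmodule]
  exacts [add_mem (one_mem _) (one_mem _), Subalgebra.algebraMap_mem _ _,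
    Subalgebra.algebraMap_mem _ _, Subalgebra.algebraMap_mem _ _]

theorem mul_map_mem_bot (hσ : IsQuaternionConj σ u v w i j k)
    (t : IsQuaternionTable a b c u v w i j k) (m : Fin 4) :
    ![1, i, j, k] m * σ (![1, i, j, k] m) ∈ (⊥ : Subalgebra R B) := by
  fin_cases m <;>
    simp only [Fin.reduceFinMk, Matrix.cons_val, hσ.map_one, hσ.map_i, hσ.map_j, hσ.map_k,
      mul_one, mul_sub, t.ii, t.jj, t.kk, Algebra.algebraMap_eq_smul_one, mul_smul_comm,
      sub_sub_cancel]
  exacts [one_mem _, Subalgebra.smul_mem _ (one_mem _) _, Subalgebra.smul_mem _ (one_mem _) _,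
    Subalgebra.smul_mem _ (one_mem _) _]

theorem map_mul_rev (hσ : IsQuaternionConj σ u v w i j k)
    (t : IsQuaternionTable a b c u v w i j k) (m n : Fin 4) :
    σ (![1, i, j, k] m * ![1, i, j, k] n) = σ (![1, i, j, k] n) * σ (![1, i, j, k] m) := by
  fin_cases m <;> fin_cases n <;>
    simp only [Fin.reduceFinMk, Matrix.cons_val, one_mul, mul_one, t.ii, t.jj, t.kk, t.jk,
      t.ki, t.ij, t.kj, t.ik, t.ji, map_add, map_sub, map_smul, hσ.map_one, hσ.map_i, hσ.map_j,
      hσ.map_k, Algebra.algebraMap_eq_smul_one, sub_mul, mul_sub, smul_mul_assoc, mul_smul_comm,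
      smul_sub, smul_smul] <;>
    module

end IsQuaternionConj

end QuaternionTable

/-- On the free quaternion ring with good basis `1, i, j, k` associated to the form
`ax² + by² + cz² + uyz + vxz + wxy`, the map `i ↦ u−i`, `j ↦ v−j`, `k ↦ w−k` extends
`R`-linearly to a standard involution. -/
theorem stmt_10 {R B : Type*} [CommRing R] [Ring B] [Algebra R B]
    (a b c u v w : R) (i j k : B)
    (bB : Module.Basis (Fin 4) R B) (hb : ⇑bB = ![1, i, j, k])
    (hii : i * i = u • i - algebraMap R B (b * c))
    (hjj : j * j = v • j - algebraMap R B (a * c))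
    (hkk : k * k = w • k - algebraMap R B (a * b))
    (hjk : j * k = a • (algebraMap R B u - i))
    (hki : k * i = b • (algebraMap R B v - j))
    (hij : i * j = c • (algebraMap R B w - k))
    (hkj : k * j = algebraMap R B (-(v * w)) + a • i + w • j + v • k)
    (hik : i * k = algebraMap R B (-(u * w)) + w • i + b • j + u • k)
    (hji : j * i = algebraMap R B (-(u * v)) + v • i + u • j + c • k) :
    ∃ σ : B →ₗ[R] B,
      σ 1 = 1 ∧
      σ i = algebraMap R B u - i ∧
      σ j = algebraMap R B v - j ∧
      σ k = algebraMap R B w - k ∧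
      (∀ x y : B, σ (x * y) = σ y * σ x) ∧
      (∀ x : B, σ (σ x) = x) ∧
      (∀ x : B, ∃ r : R, x * σ x = algebraMap R B r) := by
  obtain ⟨σ, hσ⟩ := exists_isQuaternionConj (u := u) (v := v) (w := w) bB hb
  have t : IsQuaternionTable a b c u v w i j k := ⟨hii, hjj, hkk, hjk, hki, hij, hkj, hik, hji⟩
  have hmul := bB.map_mul_rev_of_mul_basis σ (hb ▸ hσ.map_mul_rev t)
  have hinv := hσ.involutive bB hb
  refine ⟨σ, hσ.map_one, hσ.map_i, hσ.map_j, hσ.map_k, hmul, hinv, fun x => ?_⟩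
  obtain ⟨r, hr⟩ := Algebra.mem_bot.mp <| bB.mul_map_mem_bot_of_mul_basis σ hmul hinv
    (hσ.add_map_mem_bot bB hb) (hb ▸ hσ.mul_map_mem_bot t) x
  exact ⟨r, hr.symm⟩
end

section
/- Let B = R ⊕ M be an exceptional ring, so that xy = t(x)·y for all x, y ∈ M, where t : M → R is linear. Then for ξ = r + x with r ∈ R, x ∈ M, the element ξ satisfies ξ² − (2r + t(x))ξ + (r² + r·t(x)) = 0; i.e. the map r + x ↦ r + t(x) − x is a standard involution on B with trd(r+x) = 2r + t(x) and nrd(r+x) = r² + r·t(x). -/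
/-! Since `x² = t(x)·x`, the conjugate `ξ̄ = r + t(x) − x` of `ξ = r + x` satisfies
`ξ ξ̄ = r² + r·t(x)`, while `ξ + ξ̄ = 2r + t(x)` is a scalar; hence
`ξ² − trd(ξ)·ξ + ξ ξ̄ = ξ (ξ − trd(ξ) + ξ̄) = 0`, scalars being central. -/

section StandardInvolution

variable {R B : Type*} [CommRing R] [Ring B] [Algebra R B]

theorem sq_sub_smul_add_algebraMap_eq_zero {ξ η : B} {a b : R}
    (hadd : ξ + η = algebraMap R B a) (hmul : ξ * η = algebraMap R B b) :
    ξ ^ 2 - a • ξ + algebraMap R B b = 0 := by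
  have hη : η = algebraMap R B a - ξ := eq_sub_of_add_eq' hadd
  rw [← hmul, hη, mul_sub, ← Algebra.commutes, Algebra.smul_def, sq]
  abel

theorem algebraMap_add_add_algebraMap_add_sub (r c : R) (y : B) :
    (algebraMap R B r + y) + (algebraMap R B (r + c) - y) = algebraMap R B (2 * r + c) := by
  simp only [map_add, two_mul]
  abel

theorem algebraMap_add_mul_algebraMap_add_sub {c : R} {y : B} (hy : y * y = c • y) (r : R) :
    (algebraMap R B r + y) * (algebraMap R B (r + c) - y) = algebraMap R B (r ^ 2 + r * c) := by
  rw [add_mul, mul_sub, mul_sub, hy, Algebra.smul_def, ← Algebra.commutes (r + c) y]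
  simp only [map_add, map_mul, sq]
  noncomm_ring

end StandardInvolution

/-- If `B = R ⊕ M` is an exceptional ring, with `xy = t(x)·y` for `x, y ∈ M`, then
`ξ = r + x` satisfies `ξ² − (2r + t(x))ξ + (r² + r·t(x)) = 0`; indeed `r + x ↦ r + t(x) − x`
is a standard involution with `trd(r+x) = 2r + t(x)` and `nrd(r+x) = r² + r·t(x)`. -/
theorem stmt_12 {R B : Type*} [CommRing R] [Ring B] [Algebra R B]
    (M : Submodule R B) (t : M →ₗ[R] R)
    (hmul : ∀ x y : M, (x : B) * (y : B) = t x • (y : B))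
    (r : R) (x : M) :
    (algebraMap R B r + x) ^ 2 - (2 * r + t x) • (algebraMap R B r + x)
        + algebraMap R B (r ^ 2 + r * t x) = 0 ∧
    (algebraMap R B r + x) + (algebraMap R B (r + t x) - x)
        = algebraMap R B (2 * r + t x) ∧
    (algebraMap R B r + x) * (algebraMap R B (r + t x) - x)
        = algebraMap R B (r ^ 2 + r * t x) := by
  have htrd := algebraMap_add_add_algebraMap_add_sub r (t x) (x : B)
  have hnrd := algebraMap_add_mul_algebraMap_add_sub (hmul x x) r
  exact ⟨sq_sub_smul_add_algebraMap_eq_zero htrd hnrd, htrd, hnrd⟩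
end

section
/- Let B be the free R-algebra of rank 4 with good basis 1, i, j, k and multiplication laws i² = ui−bc, j² = vj−ac, k² = wk−ab, jk = a·ī + v'k, ki = b·j̄ + w'i, ij = c·k̄ + u'j (and the products determined by the standard involution). Then associativity of B forces a·u' = a·v' = a·w' = b·u' = b·v' = b·w' = c·u' = c·v' = c·w' = 0 and (u'−u)u' = (u'−u)v' = (u'−u)w' = (v'−v)u' = (v'−v)v' = (v'−v)w' = (w'−w)u' = (w'−w)v' = (w'−w)w' = 0. -/
/-!
Conjugation is an anti-automorphism fixing `R`, so it turns each of the laws for `jk`, `ki`, `ij`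
into a law for the reversed product `kj`, `ik`, `ji`. With the full multiplication table, the
coordinates of the associators `(ij)k - i(jk)`, `(jj)k - j(jk)` and `(ij)j - i(jj)` in the basis
`1, i, j, k` vanish, which kills the column of multiples of `v'`. The laws are invariant under
the cyclic relabelling `i → j → k → i` (with `a → b → c`, `u → v → w`, `u' → v' → w'`), and
rotating once and twice gives the columns of `w'` and `u'`.
-/

theorem LinearIndependent.eq_zero_of_fin_four {R M : Type*} [Ring R] [AddCommGroup M] [Module R M]
    {x : Fin 4 → M} (hx : LinearIndependent R x) {p q r s : R}
    (h : p • x 0 + q • x 1 + r • x 2 + s • x 3 = 0) : p = 0 ∧ q = 0 ∧ r = 0 ∧ s = 0 := by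
  have hcoeff := Fintype.linearIndependent_iff.mp hx ![p, q, r, s] (by simpa [Fin.sum_univ_four])
  exact ⟨hcoeff 0, hcoeff 1, hcoeff 2, hcoeff 3⟩

theorem LinearIndependent.rotate_fin_four {R M : Type*} [Ring R] [AddCommGroup M] [Module R M]
    {x₀ x₁ x₂ x₃ : M} (hx : LinearIndependent R ![x₀, x₁, x₂, x₃]) :
    LinearIndependent R ![x₀, x₂, x₃, x₁] := by
  convert hx.comp ![0, 2, 3, 1] (by decide) using 1
  ext t
  fin_cases t <;> rfl

section

variable {R B : Type*} [CommRing R] [Ring B] [Algebra R B]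

theorem mul_swap_of_antihom {σ : B →ₗ[R] B} (hanti : ∀ x y : B, σ (x * y) = σ y * σ x)
    {x y : B} {α β : R} (hx : σ x = algebraMap R B α - x) (hy : σ y = algebraMap R B β - y) :
    y * x = σ (x * y) - algebraMap R B (α * β) + β • x + α • y := by
  rw [hanti, hx, hy]
  simp only [Algebra.algebraMap_eq_smul_one, sub_mul, mul_sub, smul_mul_assoc, mul_smul_comm,
    one_mul, mul_one]
  module

theorem mul_swap_of_mul_eq_smul_conj {σ : B →ₗ[R] B} (hσ1 : σ 1 = 1)
    (hanti : ∀ x y : B, σ (x * y) = σ y * σ x) {x y z : B} {α β γ δ ζ : R}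
    (hx : σ x = algebraMap R B α - x) (hy : σ y = algebraMap R B β - y)
    (hz : σ z = algebraMap R B ζ - z) (hxy : x * y = γ • (algebraMap R B ζ - z) + δ • y) :
    y * x = γ • z + δ • (algebraMap R B β - y) - algebraMap R B (α * β) + β • x + α • y := by
  have hσ_algebraMap (r : R) : σ (algebraMap R B r) = algebraMap R B r := by
    rw [Algebra.algebraMap_eq_smul_one, map_smul, hσ1]
  rw [mul_swap_of_antihom hanti hx hy, hxy, map_add, map_smul, map_smul, map_sub, hσ_algebraMap,
    hz, sub_sub_cancel, hy]

structure GoodMulTable (a b c u v w u' v' w' : R) (i j k : B) : Prop where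
  ii : i * i = u • i - algebraMap R B (b * c)
  jj : j * j = v • j - algebraMap R B (a * c)
  kk : k * k = w • k - algebraMap R B (a * b)
  jk : j * k = a • (algebraMap R B u - i) + v' • k
  ki : k * i = b • (algebraMap R B v - j) + w' • i
  ij : i * j = c • (algebraMap R B w - k) + u' • j
  kj : k * j = a • i + v' • (algebraMap R B w - k) - algebraMap R B (v * w) + w • j + v • k
  ik : i * k = b • j + w' • (algebraMap R B u - i) - algebraMap R B (w * u) + u • k + w • i
  ji : j * i = c • k + u' • (algebraMap R B v - j) - algebraMap R B (u * v) + v • i + u • j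

namespace GoodMulTable

variable {a b c u v w u' v' w' : R} {i j k : B}

theorem rotate (h : GoodMulTable a b c u v w u' v' w' i j k) :
    GoodMulTable b c a v w u v' w' u' j k i where
  ii := h.jj.trans (by rw [mul_comm a c])
  jj := h.kk.trans (by rw [mul_comm a b])
  kk := h.ii
  jk := h.ki
  ki := h.ij
  ij := h.jk
  kj := h.ik
  ik := h.ji
  ji := h.kj

theorem assoc_ijk (h : GoodMulTable a b c u v w u' v' w' i j k) :
    i * j * k - i * (j * k) = (u * w * v' - u * v' * w' + a * u * u') • (1 : B)
      + (v' * w' - w * v' - a * u') • i + (-(b * v')) • j + ((u' - u) * v') • k := by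
  simp only [h.ii, h.kk, h.jk, h.ij, h.ik, Algebra.algebraMap_eq_smul_one,
    mul_add, add_mul, mul_sub, sub_mul, smul_mul_assoc, mul_smul_comm, smul_smul, one_mul, mul_one,
    smul_add, smul_sub]
  module

theorem assoc_jjk (h : GoodMulTable a b c u v w u' v' w' i j k) :
    j * j * k - j * (j * k) = (a * v * u' - a * u * v') • (1 : B)
      + (a * v') • i + (-(a * u')) • j + ((v - v') * v') • k := by
  simp only [h.jj, h.jk, h.ji, Algebra.algebraMap_eq_smul_one,
    mul_add, mul_sub, sub_mul, smul_mul_assoc, mul_smul_comm, smul_smul, one_mul, mul_one,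
    smul_add, smul_sub]
  module

theorem assoc_ijj (h : GoodMulTable a b c u v w u' v' w' i j k) :
    i * j * j - i * (j * j) = (-(c * w * v') - a * c * u') • (1 : B)
      + (0 : R) • i + (0 : R) • j + (c * v') • k := by
  simp only [h.jj, h.ij, h.kj, Algebra.algebraMap_eq_smul_one,
    add_mul, mul_sub, sub_mul, smul_mul_assoc, mul_smul_comm, smul_smul, one_mul, mul_one,
    smul_add, smul_sub]
  module

theorem v'_column (h : GoodMulTable a b c u v w u' v' w' i j k)
    (hli : LinearIndependent R ![(1 : B), i, j, k]) :
    a * v' = 0 ∧ b * v' = 0 ∧ c * v' = 0 ∧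
      (u' - u) * v' = 0 ∧ (v' - v) * v' = 0 ∧ (w' - w) * v' = 0 := by
  have assoc_eq_zero (x y z : B) : x * y * z - x * (y * z) = 0 := by rw [mul_assoc, sub_self]
  obtain ⟨-, hijk_i, hijk_j, hijk_k⟩ := hli.eq_zero_of_fin_four (h.assoc_ijk ▸ assoc_eq_zero i j k)
  obtain ⟨-, hjjk_i, hjjk_j, hjjk_k⟩ := hli.eq_zero_of_fin_four (h.assoc_jjk ▸ assoc_eq_zero j j k)
  obtain ⟨-, -, -, hijj_k⟩ := hli.eq_zero_of_fin_four (h.assoc_ijj ▸ assoc_eq_zero i j j)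
  refine ⟨hjjk_i, by linear_combination -hijk_j, hijj_k, hijk_k, by linear_combination -hjjk_k, ?_⟩
  linear_combination hijk_i - hjjk_j

end GoodMulTable

end

theorem stmt_14_general {R B : Type*} [CommRing R] [Ring B] [Algebra R B]
    (a b c u v w u' v' w' : R) (i j k : B)
    (bB : Module.Basis (Fin 4) R B) (hb : ⇑bB = ![1, i, j, k])
    (σ : B →ₗ[R] B) (hσ1 : σ 1 = 1)
    (hσi : σ i = algebraMap R B u - i)
    (hσj : σ j = algebraMap R B v - j)
    (hσk : σ k = algebraMap R B w - k)
    (hanti : ∀ x y : B, σ (x * y) = σ y * σ x)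
    (hii : i * i = u • i - algebraMap R B (b * c))
    (hjj : j * j = v • j - algebraMap R B (a * c))
    (hkk : k * k = w • k - algebraMap R B (a * b))
    (hjk : j * k = a • (algebraMap R B u - i) + v' • k)
    (hki : k * i = b • (algebraMap R B v - j) + w' • i)
    (hij : i * j = c • (algebraMap R B w - k) + u' • j) :
    (a * u' = 0 ∧ a * v' = 0 ∧ a * w' = 0) ∧
    (b * u' = 0 ∧ b * v' = 0 ∧ b * w' = 0) ∧
    (c * u' = 0 ∧ c * v' = 0 ∧ c * w' = 0) ∧
    ((u' - u) * u' = 0 ∧ (u' - u) * v' = 0 ∧ (u' - u) * w' = 0) ∧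
    ((v' - v) * u' = 0 ∧ (v' - v) * v' = 0 ∧ (v' - v) * w' = 0) ∧
    ((w' - w) * u' = 0 ∧ (w' - w) * v' = 0 ∧ (w' - w) * w' = 0) := by
  have hli : LinearIndependent R ![(1 : B), i, j, k] := hb ▸ bB.linearIndependent
  have h : GoodMulTable a b c u v w u' v' w' i j k :=
    { ii := hii, jj := hjj, kk := hkk, jk := hjk, ki := hki, ij := hij
      kj := mul_swap_of_mul_eq_smul_conj hσ1 hanti hσj hσk hσi hjk
      ik := mul_swap_of_mul_eq_smul_conj hσ1 hanti hσk hσi hσj hki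
      ji := mul_swap_of_mul_eq_smul_conj hσ1 hanti hσi hσj hσk hij }
  obtain ⟨av, bv, cv, uv, vv, wv⟩ := h.v'_column hli
  obtain ⟨bw, cw, aw, vw, ww, uw⟩ := h.rotate.v'_column hli.rotate_fin_four
  obtain ⟨cu, au, bu, wu, uu, vu⟩ := h.rotate.rotate.v'_column hli.rotate_fin_four.rotate_fin_four
  exact ⟨⟨au, av, aw⟩, ⟨bu, bv, bw⟩, ⟨cu, cv, cw⟩, ⟨uu, uv, uw⟩, ⟨vu, vv, vw⟩, ⟨wu, wv, ww⟩⟩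

/-- Associativity constraints on the universal multiplication laws (U): for a free rank-4
algebra with standard involution and good basis `1, i, j, k`, the parameters satisfy
`(a,b,c)ᵗ·(u',v',w') = 0` and `(u'−u, v'−v, w'−w)ᵗ·(u',v',w') = 0`. -/
theorem stmt_14 {R B : Type*} [CommRing R] [Ring B] [Algebra R B]
    (a b c u v w u' v' w' : R) (i j k : B)
    (bB : Module.Basis (Fin 4) R B) (hb : ⇑bB = ![1, i, j, k])
    (σ : B →ₗ[R] B) (hσ1 : σ 1 = 1)
    (hσi : σ i = algebraMap R B u - i)
    (hσj : σ j = algebraMap R B v - j)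
    (hσk : σ k = algebraMap R B w - k)
    (hanti : ∀ x y : B, σ (x * y) = σ y * σ x)
    (hinv : ∀ x : B, σ (σ x) = x)
    (hstd : ∀ x : B, ∃ r : R, x * σ x = algebraMap R B r)
    (hii : i * i = u • i - algebraMap R B (b * c))
    (hjj : j * j = v • j - algebraMap R B (a * c))
    (hkk : k * k = w • k - algebraMap R B (a * b))
    (hjk : j * k = a • (algebraMap R B u - i) + v' • k)
    (hki : k * i = b • (algebraMap R B v - j) + w' • i)
    (hij : i * j = c • (algebraMap R B w - k) + u' • j) :
    (a * u' = 0 ∧ a * v' = 0 ∧ a * w' = 0) ∧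
    (b * u' = 0 ∧ b * v' = 0 ∧ b * w' = 0) ∧
    (c * u' = 0 ∧ c * v' = 0 ∧ c * w' = 0) ∧
    ((u' - u) * u' = 0 ∧ (u' - u) * v' = 0 ∧ (u' - u) * w' = 0) ∧
    ((v' - v) * u' = 0 ∧ (v' - v) * v' = 0 ∧ (v' - v) * w' = 0) ∧
    ((w' - w) * u' = 0 ∧ (w' - w) * v' = 0 ∧ (w' - w) * w' = 0) :=
  stmt_14_general a b c u v w u' v' w' i j k bB hb σ hσ1 hσi hσj hσk hanti hii hjj hkk hjk hki hij
end

section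
/- Let B be a free R-algebra of rank 4 with standard involution and good basis satisfying the universal multiplication laws (U) with parameters a,b,c,u,v,w,u',v',w'. Then trd([i,j]·k̄) = −(4abc + uvw − au² − bv² − cw²) when u' = v' = w' = 0; i.e., for a free quaternion ring, {i,j,k} := trd((ij − ji)k̄) equals −D(q) where D(q) = 4abc + uvw − au² − bv² − cw² is the half-discriminant of the associated ternary form. -/
/-! Expanding `[i,j]·k̄` in the basis `1, i, j, k` by the multiplication laws gives
`(au² + cw² − 2abc) − au·i + (bv − uw)·j − cw·k`; the reduced trace is `R`-linear with
`trd 1 = 2`, `trd i = u`, `trd j = v`, `trd k = w`, which turns this into `−D(q)`. -/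

section FreeQuaternion

variable {R B : Type*} [CommRing R] [Ring B] [Algebra R B]

theorem add_map_smul_basis_eq_algebraMap {u v w : R} {i j k : B} {σ : B →ₗ[R] B}
    (hσ1 : σ 1 = 1) (hσi : σ i = algebraMap R B u - i) (hσj : σ j = algebraMap R B v - j)
    (hσk : σ k = algebraMap R B w - k) (r s t q : R) :
    (r • 1 + s • i + t • j + q • k) + σ (r • 1 + s • i + t • j + q • k)
      = algebraMap R B (2 * r + s * u + t * v + q * w) := by
  simp only [map_add, map_smul, hσ1, hσi, hσj, hσk, Algebra.algebraMap_eq_smul_one]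
  module

theorem commutator_eq_of_mul_table {c u v w : R} {i j k : B}
    (hij : i * j = c • (algebraMap R B w - k))
    (hji : j * i = algebraMap R B (-(u * v)) + v • i + u • j + c • k) :
    i * j - j * i = (u * v + c * w) • 1 - v • i - u • j - (2 * c) • k := by
  simp only [hij, hji, Algebra.algebraMap_eq_smul_one]
  module

theorem commutator_mul_conj_k_eq {a b c u v w : R} {i j k : B}
    (hij : i * j = c • (algebraMap R B w - k))
    (hji : j * i = algebraMap R B (-(u * v)) + v • i + u • j + c • k)
    (hik : i * k = algebraMap R B (-(u * w)) + w • i + b • j + u • k)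
    (hjk : j * k = a • (algebraMap R B u - i))
    (hkk : k * k = w • k - algebraMap R B (a * b)) :
    (i * j - j * i) * (algebraMap R B w - k)
      = (a * u ^ 2 + c * w ^ 2 - 2 * (a * b * c)) • 1 + (-(a * u)) • i + (b * v - u * w) • j
        + (-(c * w)) • k := by
  rw [commutator_eq_of_mul_table hij hji]
  simp only [Algebra.algebraMap_eq_smul_one, sub_mul, mul_sub, smul_mul_assoc, one_mul,
    mul_smul_comm, mul_one, hik, hjk, hkk, smul_add, smul_sub, smul_smul]
  module

end FreeQuaternion

theorem stmt_16_general {R B : Type*} [CommRing R] [Ring B] [Algebra R B]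
    (a b c u v w : R) (i j k : B)
    (σ : B →ₗ[R] B) (hσ1 : σ 1 = 1)
    (hσi : σ i = algebraMap R B u - i)
    (hσj : σ j = algebraMap R B v - j)
    (hσk : σ k = algebraMap R B w - k)
    (hkk : k * k = w • k - algebraMap R B (a * b))
    (hjk : j * k = a • (algebraMap R B u - i))
    (hij : i * j = c • (algebraMap R B w - k))
    (hik : i * k = algebraMap R B (-(u * w)) + w • i + b • j + u • k)
    (hji : j * i = algebraMap R B (-(u * v)) + v • i + u • j + c • k) :
    (i * j - j * i) * σ k + σ ((i * j - j * i) * σ k)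
      = algebraMap R B (-(4 * (a * b * c) + u * v * w
          - a * u ^ 2 - b * v ^ 2 - c * w ^ 2)) := by
  rw [hσk, commutator_mul_conj_k_eq hij hji hik hjk hkk,
    add_map_smul_basis_eq_algebraMap hσ1 hσi hσj hσk]
  congr 1
  ring

/-- For the free quaternion ring with good basis `1, i, j, k` associated to
`q = ax² + by² + cz² + uyz + vxz + wxy`, one has
`trd([i,j]·k̄) = −D(q) = −(4abc + uvw − au² − bv² − cw²)`. -/
theorem stmt_16 {R B : Type*} [CommRing R] [Ring B] [Algebra R B]
    (a b c u v w : R) (i j k : B)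
    (bB : Module.Basis (Fin 4) R B) (hb : ⇑bB = ![1, i, j, k])
    (σ : B →ₗ[R] B) (hσ1 : σ 1 = 1)
    (hσi : σ i = algebraMap R B u - i)
    (hσj : σ j = algebraMap R B v - j)
    (hσk : σ k = algebraMap R B w - k)
    (hanti : ∀ x y : B, σ (x * y) = σ y * σ x)
    (hinv : ∀ x : B, σ (σ x) = x)
    (hstd : ∀ x : B, ∃ r : R, x * σ x = algebraMap R B r)
    (hii : i * i = u • i - algebraMap R B (b * c))
    (hjj : j * j = v • j - algebraMap R B (a * c))
    (hkk : k * k = w • k - algebraMap R B (a * b))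
    (hjk : j * k = a • (algebraMap R B u - i))
    (hki : k * i = b • (algebraMap R B v - j))
    (hij : i * j = c • (algebraMap R B w - k))
    (hkj : k * j = algebraMap R B (-(v * w)) + a • i + w • j + v • k)
    (hik : i * k = algebraMap R B (-(u * w)) + w • i + b • j + u • k)
    (hji : j * i = algebraMap R B (-(u * v)) + v • i + u • j + c • k) :
    (i * j - j * i) * σ k + σ ((i * j - j * i) * σ k)
      = algebraMap R B (-(4 * (a * b * c) + u * v * w
          - a * u ^ 2 - b * v ^ 2 - c * w ^ 2)) :=
  stmt_16_general a b c u v w i j k σ hσ1 hσi hσj hσk hkk hjk hij hik hji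
end

section
/- If a free R-algebra B of rank 4 with standard involution satisfies both the quaternion multiplication laws (parameters u'=v'=w'=0) and the exceptional multiplication laws (a=b=c=0 and u'=u, v'=v, w'=w), then B ≅ R[i,j,k]/(i,j,k)² and in particular B is commutative. -/
/-!
Comparing the two expressions for `j * k`, `k * i` and `i * j` in the basis `1, i, j, k`:
the quaternion side `a • (u - i)` has no `k`-coordinate while the exceptional side is `v₂ • k`,
so `v₂ = 0`, and likewise `w₂ = u₂ = 0`. The exceptional laws then make every product of
`i, j, k` vanish, and an algebra whose basis elements pairwise commute is commutative.
-/

open Module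

section

variable {R A : Type*}

theorem Module.Basis.mul_comm_of_commute [CommSemiring R] [Semiring A] [Algebra R A]
    {ι : Type*} (e : Basis ι R A)
    (h : ∀ m n, Commute (e m) (e n)) (x y : A) : x * y = y * x := by
  have hflip : LinearMap.mul R A = (LinearMap.mul R A).flip :=
    e.ext fun m => e.ext fun n => (h m n).eq
  exact congr($hflip x y)

theorem Module.Basis.eq_zero_of_smul_algebraMap_sub_eq_smul [CommRing R] [Ring A] [Algebra R A]
    {ι : Type*} (e : Basis ι R A)
    {p q s : ι} {x y : A} (hp : e p = 1) (hq : e q = x) (hs : e s = y)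
    (hps : p ≠ s) (hqs : q ≠ s) {r t c : R}
    (h : r • (algebraMap R A t - x) = c • y) : c = 0 := by
  simpa [← hp, ← hq, ← hs, Algebra.algebraMap_eq_smul_one, hps, hqs] using
    (congrArg (e.coord s) h).symm

end

theorem stmt_17_general {R B : Type*} [CommRing R] [Ring B] [Algebra R B]
    (a b c u v w u₂ v₂ w₂ : R) (i j k : B)
    (bB : Module.Basis (Fin 4) R B) (hb : ⇑bB = ![1, i, j, k])
    -- the quaternion laws (Q) with parameters a, b, c, u, v, w:
    (hjk : j * k = a • (algebraMap R B u - i))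
    (hki : k * i = b • (algebraMap R B v - j))
    (hij : i * j = c • (algebraMap R B w - k))
    -- the exceptional laws (E) with parameters u₂, v₂, w₂:
    (hii' : i * i = u₂ • i) (hjj' : j * j = v₂ • j) (hkk' : k * k = w₂ • k)
    (hjk' : j * k = v₂ • k) (hkj' : k * j = w₂ • j)
    (hki' : k * i = w₂ • i) (hik' : i * k = u₂ • k)
    (hij' : i * j = u₂ • j) (hji' : j * i = v₂ • i) :
    (∀ x y : B, x * y = y * x) ∧
    i * i = 0 ∧ i * j = 0 ∧ i * k = 0 ∧
    j * i = 0 ∧ j * j = 0 ∧ j * k = 0 ∧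
    k * i = 0 ∧ k * j = 0 ∧ k * k = 0 := by
  have h1 : bB 0 = 1 := congrFun hb 0
  have hi : bB 1 = i := congrFun hb 1
  have hj : bB 2 = j := congrFun hb 2
  have hk : bB 3 = k := congrFun hb 3
  have hv₂ : v₂ = 0 :=
    bB.eq_zero_of_smul_algebraMap_sub_eq_smul h1 hi hk (by decide) (by decide) (hjk ▸ hjk')
  have hw₂ : w₂ = 0 :=
    bB.eq_zero_of_smul_algebraMap_sub_eq_smul h1 hj hi (by decide) (by decide) (hki ▸ hki')
  have hu₂ : u₂ = 0 :=
    bB.eq_zero_of_smul_algebraMap_sub_eq_smul h1 hk hj (by decide) (by decide) (hij ▸ hij')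
  subst hu₂ hv₂ hw₂
  simp only [zero_smul] at hii' hjj' hkk' hjk' hkj' hki' hik' hij' hji'
  refine ⟨bB.mul_comm_of_commute fun m n => ?_,
    hii', hij', hik', hji', hjj', hjk', hki', hkj', hkk'⟩
  fin_cases m <;> fin_cases n <;>
    simp [hb, Commute, SemiconjBy, hii', hij', hik', hji', hjj', hjk', hki', hkj', hkk']

/-- If a free rank-4 algebra with basis `1, i, j, k` satisfies both the quaternion
multiplication laws (Q) and the exceptional multiplication laws (E), then it is isomorphic
to `R[i,j,k]/(i,j,k)²`: all products of `i, j, k` vanish and `B` is commutative. -/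
theorem stmt_17 {R B : Type*} [CommRing R] [Ring B] [Algebra R B]
    (a b c u v w u₂ v₂ w₂ : R) (i j k : B)
    (bB : Module.Basis (Fin 4) R B) (hb : ⇑bB = ![1, i, j, k])
    -- the quaternion laws (Q) with parameters a, b, c, u, v, w:
    (hii : i * i = u • i - algebraMap R B (b * c))
    (hjj : j * j = v • j - algebraMap R B (a * c))
    (hkk : k * k = w • k - algebraMap R B (a * b))
    (hjk : j * k = a • (algebraMap R B u - i))
    (hki : k * i = b • (algebraMap R B v - j))
    (hij : i * j = c • (algebraMap R B w - k))
    (hkj : k * j = algebraMap R B (-(v * w)) + a • i + w • j + v • k)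
    (hik : i * k = algebraMap R B (-(u * w)) + w • i + b • j + u • k)
    (hji : j * i = algebraMap R B (-(u * v)) + v • i + u • j + c • k)
    -- the exceptional laws (E) with parameters u₂, v₂, w₂:
    (hii' : i * i = u₂ • i) (hjj' : j * j = v₂ • j) (hkk' : k * k = w₂ • k)
    (hjk' : j * k = v₂ • k) (hkj' : k * j = w₂ • j)
    (hki' : k * i = w₂ • i) (hik' : i * k = u₂ • k)
    (hij' : i * j = u₂ • j) (hji' : j * i = v₂ • i) :
    (∀ x y : B, x * y = y * x) ∧
    i * i = 0 ∧ i * j = 0 ∧ i * k = 0 ∧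
    j * i = 0 ∧ j * j = 0 ∧ j * k = 0 ∧
    k * i = 0 ∧ k * j = 0 ∧ k * k = 0 :=
  stmt_17_general a b c u v w u₂ v₂ w₂ i j k bB hb hjk hki hij hii' hjj' hkk' hjk' hkj' hki' hik'
    hij' hji'
end

section
/- Let B be the free exceptional ring over R with basis 1, i, j, k (multiplication i² = ui, jk = vk, kj = wj, etc.). Then the canonical exterior form φ_B : ⋀²(B/R) → ⋀⁴B, characterized by φ_B(x∧y) = 1∧x∧y∧xy, is identically zero; equivalently, 1 ∧ x ∧ y ∧ xy = 0 in ⋀⁴B for all x, y ∈ B. -/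
/-!
Write `B = R ⊕ V` with `V = R i + R j + R k`. The multiplication table says that `i`, `j`, `k`
act on `V` from the left by the scalars `u`, `v`, `w`, so `p * q = λ(p) • q` for `p, q ∈ V`, with
`λ` linear. Expanding `(a + p) * (b + q)` then shows that `x * y` lies in the `R`-span of `1`, `x`,
`y`, and an alternating map vanishes on a family one of whose entries lies in the span of the
others.
-/

open Submodule

namespace AlternatingMap

variable {R M N ι : Type*} [Semiring R] [AddCommMonoid M] [Module R M] [AddCommMonoid N]
  [Module R N]

theorem map_eq_zero_of_mem_span (f : M [⋀^ι]→ₗ[R] N) (v : ι → M) (i : ι)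
    (hv : v i ∈ span R (v '' {i}ᶜ)) : f v = 0 := by
  classical
  suffices ∀ m ∈ span R (v '' {i}ᶜ), f (Function.update v i m) = 0 by
    simpa using this (v i) hv
  intro m hm
  induction hm using Submodule.span_induction with
  | mem _ hm =>
    obtain ⟨j, hj, rfl⟩ := hm
    exact f.map_update_self v (Ne.symm hj)
  | zero => exact f.map_update_zero v i
  | add _ _ _ _ hm hm' => rw [f.map_update_add, hm, hm', add_zero]
  | smul r _ _ hm => rw [f.map_update_smul, hm, smul_zero]

end AlternatingMap

section ExceptionalRing

variable {R B : Type*} [CommRing R] [Ring B] [Algebra R B]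

theorem smul_one_add_mul_smul_one_add_mem_span {p q : B} {t : R} (hpq : p * q = t • q)
    (a b : R) :
    (a • 1 + p) * (b • 1 + q) ∈ span R {1, a • 1 + p, b • 1 + q} := by
  have hmul : (a • 1 + p) * (b • 1 + q) =
      b • (a • 1 + p) + (a + t) • (b • 1 + q) - (a * b + t * b) • (1 : B) := by
    simp only [add_mul, mul_add, smul_mul_assoc, mul_smul_comm, one_mul, mul_one, hpq]
    module
  rw [hmul]
  refine sub_mem (add_mem (smul_mem _ _ (subset_span ?_)) (smul_mem _ _ (subset_span ?_)))
    (smul_mem _ _ (subset_span ?_)) <;> simp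

theorem mul_eq_smul_of_exceptional {u v w : R} {i j k : B}
    (hii : i * i = u • i) (hjj : j * j = v • j) (hkk : k * k = w • k)
    (hjk : j * k = v • k) (hkj : k * j = w • j)
    (hki : k * i = w • i) (hik : i * k = u • k)
    (hij : i * j = u • j) (hji : j * i = v • i) (b c d b' c' d' : R) :
    (b • i + c • j + d • k) * (b' • i + c' • j + d' • k) =
      (b * u + c * v + d * w) • (b' • i + c' • j + d' • k) := by
  simp only [add_mul, mul_add, smul_mul_smul, hii, hjj, hkk, hjk, hkj, hki, hik, hij, hji,
    smul_smul]
  module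

end ExceptionalRing

theorem Module.Basis.eq_sum_repr_fin_four {R M : Type*} [Semiring R] [AddCommMonoid M]
    [Module R M] (b : Module.Basis (Fin 4) R M) (x : M) :
    x = b.repr x 0 • b 0 + b.repr x 1 • b 1 + b.repr x 2 • b 2 + b.repr x 3 • b 3 := by
  conv_lhs => rw [← b.sum_repr x]
  exact Fin.sum_univ_four _

/-- The canonical exterior form of a free exceptional ring is identically zero:
`1 ∧ x ∧ y ∧ xy = 0` in `⋀⁴B` for all `x, y ∈ B`. -/
theorem stmt_18 {R B : Type*} [CommRing R] [Ring B] [Algebra R B]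
    (u v w : R) (i j k : B)
    (bB : Module.Basis (Fin 4) R B) (hb : ⇑bB = ![1, i, j, k])
    (hii : i * i = u • i) (hjj : j * j = v • j) (hkk : k * k = w • k)
    (hjk : j * k = v • k) (hkj : k * j = w • j)
    (hki : k * i = w • i) (hik : i * k = u • k)
    (hij : i * j = u • j) (hji : j * i = v • i)
    (x y : B) :
    ExteriorAlgebra.ιMulti R 4 ![1, x, y, x * y] = 0 := by
  have hdecomp (z : B) :
      z = bB.repr z 0 • 1 + (bB.repr z 1 • i + bB.repr z 2 • j + bB.repr z 3 • k) := by
    simpa [hb, add_assoc] using bB.eq_sum_repr_fin_four z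
  have hxy : x * y ∈ span R {1, x, y} := by
    rw [hdecomp x, hdecomp y]
    exact smul_one_add_mul_smul_one_add_mem_span
      (mul_eq_smul_of_exceptional hii hjj hkk hjk hkj hki hik hij hji _ _ _ _ _ _) _ _
  refine AlternatingMap.map_eq_zero_of_mem_span _ _ 3 (span_mono ?_ hxy)
  rintro _ (rfl | rfl | rfl)
  exacts [⟨0, by simp, rfl⟩, ⟨1, by simp, rfl⟩, ⟨2, by simp, rfl⟩]
end
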